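/- For any two non-isomorphic finite graphs G and H, there exists a finite graph F such that Hom(F, G) ≠ Hom(F, H). Consequently, the structural encoding MoSE_{F} (the multiset of rooted homomorphism counts from F over all vertices) distinguishes G and H, since the sum over v of Hom_{u→v}(F, ·) equals Hom(F, ·). -/

import Mathlib

open SimpleGraph Finset

open Function


universe u v
variable {V : Type u} {W : Type v}

def quotG (F : SimpleGraph V) (s : Setoid V) : SimpleGraph (Quotient s) where
  Adj x y := x ≠ y ∧ ∃ a b, F.Adj a b ∧ Quotient.mk s a = x ∧ Quotient.mk s b = y
  symm := ⟨by rintro x y ⟨hne, a, b, hab, ha, hb⟩; exact ⟨hne.symm, b, a, hab.symm, hb, ha⟩⟩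
  loopless := ⟨fun x h => h.1 rfl⟩

def Compat (F : SimpleGraph V) (s : Setoid V) : Prop := ∀ ⦃a b⦄, s a b → ¬ F.Adj a b

def mkHom (F : SimpleGraph V) {s : Setoid V} (hs : Compat F s) : F →g quotG F s where
  toFun := Quotient.mk s
  map_rel' := fun {a b} hab => ⟨fun h => hs (Quotient.eq.mp h) hab, a, b, hab, rfl, rfl⟩

def descendAt (F : SimpleGraph V) (G : SimpleGraph W) (s : Setoid V) (f : F →g G)
    (h : ∀ a b, s a b → f a = f b) : quotG F s →g G where
  toFun := Quotient.lift f h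
  map_rel' := by rintro x y ⟨-, a, b, hab, rfl, rfl⟩; exact f.map_rel hab

lemma compat_ker (F : SimpleGraph V) (G : SimpleGraph W) (f : F →g G) :
    Compat F (Setoid.ker ⇑f) := fun a b h hab => by
  have := f.map_rel hab
  rw [show f a = f b from h] at this
  exact G.loopless.irrefl _ this

/-- homs with kernel `s` correspond to injective homs from the quotient graph. -/
def fiberEquiv (F : SimpleGraph V) (G : SimpleGraph W) (s : Setoid V) (hs : Compat F s) :
    {f : F →g G // Setoid.ker ⇑f = s} ≃ {g : quotG F s →g G // Injective ⇑g} where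
  toFun p := ⟨descendAt F G s p.1 (fun a b h => by rw [← p.2] at h; exact h), by
    rintro ⟨a⟩ ⟨b⟩ h
    exact Quotient.sound (p.2 ▸ (show Setoid.ker ⇑p.1 a b from h))⟩
  invFun q := ⟨q.1.comp (mkHom F hs), Setoid.ext fun a b => by
    constructor
    · intro h; exact Quotient.eq.mp (q.2 h)
    · intro h; exact congrArg q.1 (Quotient.sound h)⟩
  left_inv p := Subtype.ext (by ext a; rfl)
  right_inv q := Subtype.ext (by ext ⟨a⟩; rfl)

lemma fiber_isEmpty (F : SimpleGraph V) (G : SimpleGraph W) (s : Setoid V) (hs : ¬ Compat F s) :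
    IsEmpty {f : F →g G // Setoid.ker ⇑f = s} :=
  ⟨fun p => hs (p.2 ▸ compat_ker F G p.1)⟩

instance [Finite V] : Finite (Setoid V) :=
  Finite.of_injective (fun s : Setoid V => ⇑s) (fun s t h => Setoid.ext fun a b => by simp only at h; rw [show ⇑s = ⇑t from h])

lemma nat_card_sigma {ι : Type*} [Fintype ι] (α : ι → Type*) [∀ i, Finite (α i)] :
    Nat.card (Σ i, α i) = ∑ i, Nat.card (α i) := by
  letI := fun i => Fintype.ofFinite (α i)
  simp [Nat.card_eq_fintype_card]

/-- the number of injective homomorphisms -/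
noncomputable def injCard (F : SimpleGraph V) (G : SimpleGraph W) : ℕ :=
  Nat.card {g : F →g G // Injective ⇑g}

lemma card_hom_eq_sum [Fintype V] [Finite W] [Fintype (Setoid V)]
    (F : SimpleGraph V) (G : SimpleGraph W) :
    Nat.card (F →g G) = ∑ s : Setoid V, Nat.card {f : F →g G // Setoid.ker ⇑f = s} := by
  rw [Nat.card_congr (Equiv.sigmaFiberEquiv (fun f : F →g G => Setoid.ker ⇑f)).symm]
  exact nat_card_sigma _

lemma homCard_congr {V' : Type*} {F : SimpleGraph V} {F' : SimpleGraph V'}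
    (e : F ≃g F') (G : SimpleGraph W) : Nat.card (F →g G) = Nat.card (F' →g G) := by
  refine Nat.card_congr ⟨fun f => f.comp e.symm.toHom, fun f => f.comp e.toHom, ?_, ?_⟩
  · intro f; ext a; exact congrArg f (e.symm_apply_apply a)
  · intro f; ext a; exact congrArg f (e.apply_symm_apply a)

lemma injCard_congr {V' : Type*} {F : SimpleGraph V} {F' : SimpleGraph V'}
    (e : F ≃g F') (G : SimpleGraph W) : injCard F G = injCard F' G := by
  refine Nat.card_congr ⟨fun p => ⟨p.1.comp e.symm.toHom, ?_⟩,
    fun p => ⟨p.1.comp e.toHom, ?_⟩, ?_, ?_⟩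
  · rw [Hom.coe_comp]; exact p.2.comp e.symm.toEquiv.injective
  · rw [Hom.coe_comp]; exact p.2.comp e.toEquiv.injective
  · intro p; refine Subtype.ext ?_; ext a; exact congrArg p.1 (e.symm_apply_apply a)
  · intro p; refine Subtype.ext ?_; ext a; exact congrArg p.1 (e.apply_symm_apply a)

/-- `F` is isomorphic to its quotient by the bottom setoid. -/
def botIso (F : SimpleGraph V) : F ≃g quotG F ⊥ where
  toEquiv := ⟨Quotient.mk _, Quotient.lift id (fun _ _ h => h), fun a => rfl,
    fun x => by induction x using Quotient.ind; rfl⟩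
  map_rel_iff' := by
    intro a b
    constructor
    · rintro ⟨hne, a', b', hab, ha, hb⟩
      obtain rfl : a' = a := Quotient.eq.mp ha
      obtain rfl : b' = b := Quotient.eq.mp hb
      exact hab
    · intro hab
      exact ⟨fun h => F.ne_of_adj hab (Quotient.eq.mp h), a, b, hab, rfl, rfl⟩

lemma compat_bot (F : SimpleGraph V) : Compat F (⊥ : Setoid V) := by
  intro a b h hab
  exact F.ne_of_adj hab h

lemma card_quotient_lt [Fintype V] (s : Setoid V) (hs : s ≠ ⊥) :
    Nat.card (Quotient s) < Nat.card V := by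
  classical
  letI : Fintype (Quotient s) := Fintype.ofFinite _
  have hsurj : Surjective (Quotient.mk s) := Quotient.mk_surjective
  obtain ⟨a, b, hab, hne⟩ : ∃ a b, s a b ∧ a ≠ b := by
    by_contra hc
    push_neg at hc
    exact hs (le_antisymm (fun a b h => hc a b h) bot_le)
  have hninj : ¬ Injective (Quotient.mk s) := fun hinj => hne (hinj (Quotient.sound hab))
  rw [Nat.card_eq_fintype_card, Nat.card_eq_fintype_card]
  rcases lt_or_eq_of_le (Fintype.card_le_of_surjective _ hsurj) with h | h
  · exact h
  · exact absurd ((Fintype.bijective_iff_surjective_and_card _).mpr ⟨hsurj, h.symm⟩).1 hninj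

lemma injCard_eq_of_hom_eq {VG : Type*} {VH : Type*} [Fintype VG] [Fintype VH]
    (G : SimpleGraph VG) (H : SimpleGraph VH)
    (hyp : ∀ (V : Type u) [Fintype V] (F : SimpleGraph V),
      Nat.card (F →g G) = Nat.card (F →g H)) :
    ∀ (n : ℕ) (V : Type u) [Fintype V] (F : SimpleGraph V), Fintype.card V = n →
      injCard F G = injCard F H := by
  intro n
  induction n using Nat.strong_induction_on with
  | _ n IH =>
    intro V _ F hcard
    classical
    letI : Fintype (Setoid V) := Fintype.ofFinite _
    have hsum : ∑ s : Setoid V, Nat.card {f : F →g G // Setoid.ker ⇑f = s}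
        = ∑ s : Setoid V, Nat.card {f : F →g H // Setoid.ker ⇑f = s} := by
      rw [← card_hom_eq_sum F G, ← card_hom_eq_sum F H]; exact hyp V F
    have hne : ∀ s : Setoid V, s ≠ ⊥ →
        Nat.card {f : F →g G // Setoid.ker ⇑f = s}
          = Nat.card {f : F →g H // Setoid.ker ⇑f = s} := by
      intro s hs
      by_cases hc : Compat F s
      · have h1 := Nat.card_congr (fiberEquiv F G s hc)
        have h2 := Nat.card_congr (fiberEquiv F H s hc)
        letI : Fintype (Quotient s) := Fintype.ofFinite _
        have hlt : Fintype.card (Quotient s) < n := by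
          have := card_quotient_lt s hs
          rwa [Nat.card_eq_fintype_card, Nat.card_eq_fintype_card, hcard] at this
        rw [h1, h2]
        exact IH _ hlt (Quotient s) (quotG F s) rfl
      · haveI := fiber_isEmpty F G s hc
        haveI := fiber_isEmpty F H s hc
        rw [Nat.card_of_isEmpty, Nat.card_of_isEmpty]
    have hGbot : Nat.card {f : F →g G // Setoid.ker ⇑f = (⊥ : Setoid V)} = injCard F G :=
      (Nat.card_congr (fiberEquiv F G ⊥ (compat_bot F))).trans
        (injCard_congr (botIso F) G).symm
    have hHbot : Nat.card {f : F →g H // Setoid.ker ⇑f = (⊥ : Setoid V)} = injCard F H :=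
      (Nat.card_congr (fiberEquiv F H ⊥ (compat_bot F))).trans
        (injCard_congr (botIso F) H).symm
    rw [← Finset.add_sum_erase _ _ (Finset.mem_univ (⊥ : Setoid V)),
      ← Finset.add_sum_erase _ _ (Finset.mem_univ (⊥ : Setoid V))] at hsum
    rw [Finset.sum_congr rfl (fun s hsmem => hne s (Finset.ne_of_mem_erase hsmem))] at hsum
    have := Nat.add_right_cancel hsum
    rw [hGbot, hHbot] at this
    exact this

lemma iso_of_mutual_inj {VG VH : Type*} [Fintype VG] [Fintype VH]
    {G : SimpleGraph VG} {H : SimpleGraph VH}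
    (f : G →g H) (hf : Injective ⇑f) (g : H →g G) (hg : Injective ⇑g) :
    Nonempty (G ≃g H) := by
  classical
  have hcard : Fintype.card VG = Fintype.card VH :=
    le_antisymm (Fintype.card_le_of_injective _ hf) (Fintype.card_le_of_injective _ hg)
  have hfbij : Bijective ⇑f := (Fintype.bijective_iff_injective_and_card ⇑f).mpr ⟨hf, hcard⟩
  set φ : VG → VG := ⇑g ∘ ⇑f with hφ
  have hφbij : Bijective φ := Finite.injective_iff_bijective.mp (hg.comp hf)
  -- iterates of φ are homomorphisms
  have hiter : ∀ (k : ℕ) {a b : VG}, G.Adj a b → G.Adj (φ^[k] a) (φ^[k] b) := by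
    intro k
    induction k with
    | zero => intro a b h; exact h
    | succ k ih =>
      intro a b h
      rw [Function.iterate_succ_apply, Function.iterate_succ_apply]
      exact ih (g.map_rel (f.map_rel h))
  -- some positive iterate of φ is the identity
  let π : Equiv.Perm VG := Equiv.ofBijective φ hφbij
  have hπ : ∀ a, π a = φ a := fun a => rfl
  obtain ⟨m, hm0, hmid⟩ : ∃ m : ℕ, 0 < m ∧ ∀ a, φ^[m] a = a := by
    refine ⟨orderOf π, orderOf_pos π, fun a => ?_⟩
    have h1 : π ^ (orderOf π) = 1 := pow_orderOf_eq_one π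
    have h2 : (π ^ (orderOf π)) a = a := by rw [h1]; rfl
    rwa [Equiv.Perm.coe_pow] at h2
  have hrefl : ∀ {a b : VG}, H.Adj (f a) (f b) → G.Adj a b := by
    intro a b h
    have h1 : G.Adj (φ a) (φ b) := g.map_rel h
    have h2 := hiter (m - 1) h1
    rw [← Function.iterate_succ_apply, ← Function.iterate_succ_apply,
      show (m - 1).succ = m from by omega, hmid, hmid] at h2
    exact h2
  exact ⟨⟨Equiv.ofBijective ⇑f hfbij, fun {a b} => ⟨hrefl, f.map_rel⟩⟩⟩

lemma lovasz_injCard {VG : Type*} {VH : Type*} [Fintype VG] [Fintype VH]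
    (G : SimpleGraph VG) (H : SimpleGraph VH)
    (hyp : ∀ (n : ℕ) (F : SimpleGraph (Fin n)), Nat.card (F →g G) = Nat.card (F →g H))
    (V : Type u) [Fintype V] (F : SimpleGraph V) : injCard F G = injCard F H := by
  have homEq : ∀ (V : Type u) [Fintype V] (F : SimpleGraph V),
      Nat.card (F →g G) = Nat.card (F →g H) := by
    intro V _ F
    have e := F.overFinIso (rfl : Fintype.card V = Fintype.card V)
    rw [homCard_congr e G, homCard_congr e H]
    exact hyp _ _
  exact injCard_eq_of_hom_eq G H homEq (Fintype.card V) V F rfl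

lemma lovasz {VG : Type v} {VH : Type w} [Fintype VG] [Fintype VH]
    (G : SimpleGraph VG) (H : SimpleGraph VH)
    (hyp : ∀ (n : ℕ) (F : SimpleGraph (Fin n)), Nat.card (F →g G) = Nat.card (F →g H)) :
    Nonempty (G ≃g H) := by
  classical
  have hGG : injCard G G = injCard G H := lovasz_injCard G H hyp VG G
  have hHH : injCard H H = injCard H G :=
    lovasz_injCard H G (fun n F => (hyp n F).symm) VH H
  have hposG : 0 < injCard G G := by
    have : Nonempty {g : G →g G // Injective ⇑g} := ⟨⟨Hom.id, fun a b h => h⟩⟩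
    exact Nat.card_pos
  have hposH : 0 < injCard H H := by
    have : Nonempty {g : H →g H // Injective ⇑g} := ⟨⟨Hom.id, fun a b h => h⟩⟩
    exact Nat.card_pos
  rw [hGG] at hposG
  rw [hHH] at hposH
  obtain ⟨f, hf⟩ := (Nat.card_pos_iff.mp hposG).1.some
  obtain ⟨g, hg⟩ := (Nat.card_pos_iff.mp hposH).1.some
  exact iso_of_mutual_inj f hf g hg


/-- For any two non-isomorphic finite graphs `G` and `H`, there exists a finite graph `F`
whose homomorphism counts into `G` and `H` differ; consequently the multiset of rooted
homomorphism counts from `F` (the structural encoding `MoSE_F`) distinguishes `G` and `H`. -/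
theorem exists_pattern_distinguishing_nonisomorphic {VG VH : Type*} [Fintype VG] [Fintype VH]
    (G : SimpleGraph VG) (H : SimpleGraph VH) (hniso : IsEmpty (G ≃g H)) :
    ∃ (n : ℕ) (F : SimpleGraph (Fin n)),
      Nat.card (F →g G) ≠ Nat.card (F →g H) ∧
      ∀ u : Fin n,
        (Finset.univ.val.map fun v : VG => Nat.card {f : F →g G // f u = v}) ≠
          (Finset.univ.val.map fun v : VH => Nat.card {f : F →g H // f u = v}) := by
  classical
  have hex : ∃ (n : ℕ) (F : SimpleGraph (Fin n)),
      Nat.card (F →g G) ≠ Nat.card (F →g H) := by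
    by_contra hc
    push_neg at hc
    exact hniso.elim (lovasz G H fun n F => hc n F).some
  obtain ⟨n, F, hne⟩ := hex
  refine ⟨n, F, hne, fun u heq => hne ?_⟩
  have hG : Nat.card (F →g G) = ∑ v : VG, Nat.card {f : F →g G // f u = v} := by
    rw [Nat.card_congr (Equiv.sigmaFiberEquiv (fun f : F →g G => f u)).symm]
    exact nat_card_sigma _
  have hH : Nat.card (F →g H) = ∑ v : VH, Nat.card {f : F →g H // f u = v} := by
    rw [Nat.card_congr (Equiv.sigmaFiberEquiv (fun f : F →g H => f u)).symm]
    exact nat_card_sigma _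
  rw [hG, hH]
  exact congrArg Multiset.sum heq
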